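/- Let A be an n×n real matrix, B an n×m real matrix, C a p×n real matrix, Q a p×p real matrix, R an m×m real matrix, s ∈ ℝⁿ and r ∈ ℝᵐ. Define the stage cost φ(x,u) = |xᵀCᵀQCx + uᵀRu + sᵀx + rᵀu| and the value function V : ℝⁿ → [0,∞] by V(x) = inf over all input sequences u : ℕ → ℝᵐ of ∑_{k=0}^∞ φ(x_k, u_k), where x_0 = x and x_{k+1} = A x_k + B u_k. Suppose there exist an m×n real matrix K, a constant M > 0, and ρ ∈ (0,1) such that ‖(A + B K)^k x‖ ≤ M ρ^k ‖x‖ for all k ∈ ℕ and all x ∈ ℝⁿ. Then there exist constants c₁, c₂ ≥ 0 such that V(x) ≤ c₁ ‖x‖² + c₂ ‖x‖ for every x ∈ ℝⁿ. -/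

import Mathlib

open scoped ENNReal Matrix

/-- The trajectory of the discrete-time linear system `x_{k+1} = A x_k + B u_k`
starting from `x0` under the input sequence `u`. -/
def traj {n m : ℕ} (A : Matrix (Fin n) (Fin n) ℝ) (B : Matrix (Fin n) (Fin m) ℝ)
    (x0 : Fin n → ℝ) (u : ℕ → Fin m → ℝ) : ℕ → Fin n → ℝ
  | 0 => x0
  | k + 1 => A.mulVec (traj A B x0 u k) + B.mulVec (u k)

/-- The Euclidean norm of a vector in `Fin n → ℝ`. -/
noncomputable def eucNorm {n : ℕ} (x : Fin n → ℝ) : ℝ :=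
  ‖(EuclideanSpace.equiv (Fin n) ℝ).symm x‖

/-!
Feeding back `u_k = K x_k` turns the trajectory into `x_k = (A + B K)^k x`, and along it the
stage cost is `|x_kᵀ P x_k + wᵀ x_k|` with `P = CᵀQC + KᵀRK` and `w = s + Kᵀr`, hence at most
`‖P‖ ‖x_k‖² + ‖w‖ ‖x_k‖ ≤ ‖P‖ M² ρ^{2k} ‖x‖² + ‖w‖ M ρ^k ‖x‖`. Summing the two geometric series
bounds the cost of this one input sequence, and so the infimum `V x`.
-/

open scoped Matrix.Norms.L2Operator

lemma eucNorm_nonneg {n : ℕ} (x : Fin n → ℝ) : 0 ≤ eucNorm x := norm_nonneg _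

lemma eucNorm_mulVec_le {a b : ℕ} (P : Matrix (Fin a) (Fin b) ℝ) (x : Fin b → ℝ) :
    eucNorm (P *ᵥ x) ≤ ‖P‖ * eucNorm x :=
  P.l2_opNorm_mulVec (WithLp.toLp 2 x)

lemma abs_dotProduct_le {n : ℕ} (x y : Fin n → ℝ) : |x ⬝ᵥ y| ≤ eucNorm x * eucNorm y := by
  have := abs_real_inner_le_norm (WithLp.toLp 2 y) (WithLp.toLp 2 x)
  rwa [EuclideanSpace.inner_toLp_toLp, star_trivial, mul_comm] at this

lemma abs_dotProduct_mulVec_add_le {n : ℕ} (P : Matrix (Fin n) (Fin n) ℝ) (w y : Fin n → ℝ) :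
    |y ⬝ᵥ P *ᵥ y + w ⬝ᵥ y| ≤ ‖P‖ * eucNorm y ^ 2 + eucNorm w * eucNorm y := by
  have hquad : |y ⬝ᵥ P *ᵥ y| ≤ ‖P‖ * eucNorm y ^ 2 :=
    calc |y ⬝ᵥ P *ᵥ y| ≤ eucNorm y * eucNorm (P *ᵥ y) := abs_dotProduct_le _ _
      _ ≤ eucNorm y * (‖P‖ * eucNorm y) :=
          mul_le_mul_of_nonneg_left (eucNorm_mulVec_le P y) (eucNorm_nonneg y)
      _ = ‖P‖ * eucNorm y ^ 2 := by ring
  exact (abs_add_le _ _).trans (add_le_add hquad (abs_dotProduct_le w y))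

lemma dotProduct_mulVec_add_feedback {n m : ℕ} (P : Matrix (Fin n) (Fin n) ℝ)
    (R : Matrix (Fin m) (Fin m) ℝ) (K : Matrix (Fin m) (Fin n) ℝ) (s : Fin n → ℝ) (r : Fin m → ℝ)
    (y : Fin n → ℝ) :
    y ⬝ᵥ P *ᵥ y + K *ᵥ y ⬝ᵥ R *ᵥ (K *ᵥ y) + s ⬝ᵥ y + r ⬝ᵥ K *ᵥ y
      = y ⬝ᵥ (P + Kᵀ * R * K) *ᵥ y + (s + Kᵀ *ᵥ r) ⬝ᵥ y := by
  have hquad : K *ᵥ y ⬝ᵥ R *ᵥ (K *ᵥ y) = y ⬝ᵥ (Kᵀ * R * K) *ᵥ y := by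
    rw [← Matrix.mulVec_mulVec, ← Matrix.mulVec_mulVec, Matrix.dotProduct_mulVec y Kᵀ,
      Matrix.vecMul_transpose]
  have hlin : r ⬝ᵥ K *ᵥ y = (Kᵀ *ᵥ r) ⬝ᵥ y := by
    rw [Matrix.dotProduct_mulVec, Matrix.mulVec_transpose]
  rw [hquad, hlin, Matrix.add_mulVec, dotProduct_add, add_dotProduct]
  ring

lemma traj_feedback {n m : ℕ} (A : Matrix (Fin n) (Fin n) ℝ) (B : Matrix (Fin n) (Fin m) ℝ)
    (K : Matrix (Fin m) (Fin n) ℝ) (x : Fin n → ℝ) (k : ℕ) :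
    traj A B x (fun j => K *ᵥ ((A + B * K) ^ j *ᵥ x)) k = (A + B * K) ^ k *ᵥ x := by
  induction k with
  | zero => rw [traj, pow_zero, Matrix.one_mulVec]
  | succ k ih =>
    rw [traj, ih, pow_succ', ← Matrix.mulVec_mulVec, Matrix.add_mulVec, ← Matrix.mulVec_mulVec]

lemma tsum_ofReal_le_of_le_geometric {f : ℕ → ℝ} {a b q ρ : ℝ} (ha : 0 ≤ a) (hb : 0 ≤ b)
    (hq0 : 0 ≤ q) (hq1 : q < 1) (hρ0 : 0 ≤ ρ) (hρ1 : ρ < 1)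
    (hf : ∀ k, f k ≤ a * q ^ k + b * ρ ^ k) :
    ∑' k, ENNReal.ofReal (f k) ≤ ENNReal.ofReal (a * (1 - q)⁻¹ + b * (1 - ρ)⁻¹) := by
  have hsum : HasSum (fun k => a * q ^ k + b * ρ ^ k) (a * (1 - q)⁻¹ + b * (1 - ρ)⁻¹) :=
    ((hasSum_geometric_of_lt_one hq0 hq1).mul_left a).add
      ((hasSum_geometric_of_lt_one hρ0 hρ1).mul_left b)
  rw [← hsum.tsum_eq, ENNReal.ofReal_tsum_of_nonneg (fun k => by positivity) hsum.summable]
  exact ENNReal.tsum_le_tsum fun k => ENNReal.ofReal_le_ofReal (hf k)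

theorem value_function_quadratic_bound {n m p : ℕ}
    (A : Matrix (Fin n) (Fin n) ℝ) (B : Matrix (Fin n) (Fin m) ℝ)
    (C : Matrix (Fin p) (Fin n) ℝ) (Q : Matrix (Fin p) (Fin p) ℝ)
    (R : Matrix (Fin m) (Fin m) ℝ) (s : Fin n → ℝ) (r : Fin m → ℝ)
    (φ : (Fin n → ℝ) → (Fin m → ℝ) → ℝ)
    (hφ : ∀ (x : Fin n → ℝ) (u : Fin m → ℝ),
      φ x u = |x ⬝ᵥ (Cᵀ * Q * C).mulVec x + u ⬝ᵥ R.mulVec u + s ⬝ᵥ x + r ⬝ᵥ u|)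
    (V : (Fin n → ℝ) → ℝ≥0∞)
    (hV : ∀ x : Fin n → ℝ,
      V x = ⨅ u : ℕ → Fin m → ℝ, ∑' k : ℕ, ENNReal.ofReal (φ (traj A B x u k) (u k)))
    (K : Matrix (Fin m) (Fin n) ℝ) (M : ℝ) (hM : 0 < M) (ρ : ℝ) (hρ0 : 0 < ρ) (hρ1 : ρ < 1)
    (hstab : ∀ (k : ℕ) (x : Fin n → ℝ),
      eucNorm (((A + B * K) ^ k).mulVec x) ≤ M * ρ ^ k * eucNorm x) :
    ∃ c₁ c₂ : ℝ, 0 ≤ c₁ ∧ 0 ≤ c₂ ∧ ∀ x : Fin n → ℝ,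
      V x ≤ ENNReal.ofReal (c₁ * eucNorm x ^ 2 + c₂ * eucNorm x) := by
  set P := Cᵀ * Q * C + Kᵀ * R * K
  set w := s + Kᵀ *ᵥ r
  have hρ2 : ρ ^ 2 < 1 := pow_lt_one₀ hρ0.le hρ1 two_ne_zero
  have hw := eucNorm_nonneg w
  refine ⟨‖P‖ * M ^ 2 * (1 - ρ ^ 2)⁻¹, eucNorm w * M * (1 - ρ)⁻¹,
    by have := sub_pos.2 hρ2; positivity, by have := sub_pos.2 hρ1; positivity, fun x => ?_⟩
  have hx := eucNorm_nonneg x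
  set u : ℕ → Fin m → ℝ := fun j => K *ᵥ ((A + B * K) ^ j *ᵥ x)
  have hcost (k : ℕ) : φ (traj A B x u k) (u k)
      ≤ ‖P‖ * M ^ 2 * eucNorm x ^ 2 * (ρ ^ 2) ^ k + eucNorm w * M * eucNorm x * ρ ^ k := by
    set y := (A + B * K) ^ k *ᵥ x
    have hy : eucNorm y ≤ M * ρ ^ k * eucNorm x := hstab k x
    have hy0 := eucNorm_nonneg y
    rw [hφ, traj_feedback, dotProduct_mulVec_add_feedback]
    calc _ ≤ ‖P‖ * eucNorm y ^ 2 + eucNorm w * eucNorm y := abs_dotProduct_mulVec_add_le P w y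
      _ ≤ ‖P‖ * (M * ρ ^ k * eucNorm x) ^ 2 + eucNorm w * (M * ρ ^ k * eucNorm x) := by gcongr
      _ = _ := by ring
  calc V x ≤ ∑' k, ENNReal.ofReal (φ (traj A B x u k) (u k)) := hV x ▸ iInf_le _ u
    _ ≤ _ := tsum_ofReal_le_of_le_geometric (by positivity) (by positivity) (sq_nonneg ρ) hρ2
          hρ0.le hρ1 hcost
    _ = _ := by congr 1; ring
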